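/- arXiv:2305.10969 — 5 statements merged into one kernel-verified Lean document; each statement's English description precedes it below -/
import Mathlib

section
/- Under the Tullock delegation model, the proxy selected by the weighted median rule is a proxy whose declared position is closest to the unweighted median of the entire voter population (proxies plus followers). Formally, if i* is a median voter of the combined profile, then the weighted-median winning proxy equals the proxy nearest to that median position. -/
/-!
The nearest proxy `j0` to the median `μ` is itself a weighted median. A voter counted in the
weight of a proxy `k` with `s k < s j0` is `k` itself or a follower nearer to `s k` than to `s j0`,
so it lies left of the midpoint of `s k` and `s j0`; since `μ` is nearer to `s j0`, that midpoint
lies left of `μ`. Hence the weight strictly left of `j0` is at most the number of voters strictly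
left of `μ`, i.e. at most half, and symmetrically on the right. As the total weight `m + n` is odd,
all weighted medians sit at the same position, and `j0` is the only proxy there.
-/

/-- `x` is a median of the multiset `P`. -/
def IsMedian (P : Multiset ℝ) (x : ℝ) : Prop :=
  x ∈ P ∧ 2 * (P.filter (fun y => y < x)).card ≤ P.card ∧
    2 * (P.filter (fun y => x < y)).card ≤ P.card

/-- The combined multiset of positions of proxies and followers. -/
def combined {m n : ℕ} (s : Fin m → ℝ) (p : Fin n → ℝ) : Multiset ℝ :=
  Finset.univ.val.map s + Finset.univ.val.map p

/-- The weight of proxy `k`: itself plus the followers delegating to it. -/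
def weight {m n : ℕ} (φ : Fin n → Fin m) (k : Fin m) : ℕ :=
  1 + (Finset.univ.filter (fun i : Fin n => φ i = k)).card

open Finset

theorem le_of_two_mul_sum_filter_le {ι α : Type*} [Fintype ι] [LinearOrder α]
    (f : ι → α) (w : ι → ℕ) (hodd : Odd (∑ k, w k)) {a b : α}
    (ha : 2 * ∑ k ∈ univ.filter (fun k => f k < a), w k ≤ ∑ k, w k)
    (hb : 2 * ∑ k ∈ univ.filter (fun k => b < f k), w k ≤ ∑ k, w k) :
    a ≤ b := by
  by_contra! hba
  have hcover : ∑ k, w k ≤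
      ∑ k ∈ univ.filter (fun k => f k < a), w k + ∑ k ∈ univ.filter (fun k => b < f k), w k := by
    rw [sum_filter, sum_filter, ← sum_add_distrib]
    refine sum_le_sum fun k _ => ?_
    rcases lt_or_ge (f k) a with h | h
    · simp [h]
    · simp [hba.trans_le h]
  obtain ⟨t, ht⟩ := hodd
  omega

theorem add_lt_two_mul_of_abs_sub_lt {a b x : ℝ} (hab : a < b) (h : |b - x| < |a - x|) :
    a + b < 2 * x := by
  rcases abs_cases (a - x) with ⟨e1, _⟩ | ⟨e1, _⟩ <;>
    rcases abs_cases (b - x) with ⟨e2, _⟩ | ⟨e2, _⟩ <;> linarith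

theorem two_mul_lt_add_of_abs_sub_lt {a b x : ℝ} (hab : a < b) (h : |a - x| < |b - x|) :
    2 * x < a + b := by
  rcases abs_cases (a - x) with ⟨e1, _⟩ | ⟨e1, _⟩ <;>
    rcases abs_cases (b - x) with ⟨e2, _⟩ | ⟨e2, _⟩ <;> linarith

section Delegation

variable {m n : ℕ}

theorem sum_weight (φ : Fin n → Fin m) : ∑ k, weight φ k = m + n := by
  simp only [weight]
  rw [sum_add_distrib, ← card_eq_sum_card_fiberwise (f := φ) (fun i _ => mem_univ _)]
  simp

theorem sum_weight_filter (φ : Fin n → Fin m) (q : Fin m → Prop) [DecidablePred q] :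
    ∑ k ∈ univ.filter q, weight φ k =
      #(univ.filter q) + #(univ.filter (fun i => q (φ i))) := by
  simp only [weight]
  rw [sum_add_distrib, sum_const, smul_eq_mul, mul_one,
    card_eq_sum_card_fiberwise (f := φ) (t := univ.filter q) (fun i hi => by simpa using hi)]
  congr 1
  refine sum_congr rfl fun k hk => ?_
  rw [filter_filter]
  refine congr_arg card (filter_congr fun i _ => ?_)
  rw [mem_filter] at hk
  exact ⟨fun h => ⟨h ▸ hk.2, h⟩, And.right⟩

theorem card_combined (s : Fin m → ℝ) (p : Fin n → ℝ) : (combined s p).card = m + n := by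
  simp [combined]

theorem card_filter_combined (s : Fin m → ℝ) (p : Fin n → ℝ) (q : ℝ → Prop) [DecidablePred q] :
    ((combined s p).filter q).card =
      #(univ.filter (fun k => q (s k))) + #(univ.filter (fun i => q (p i))) := by
  rw [combined, Multiset.filter_add, Multiset.card_add, ← Multiset.countP_eq_card_filter,
    ← Multiset.countP_eq_card_filter, Multiset.countP_map, Multiset.countP_map]
  rfl

theorem two_mul_sum_weight_filter_lt_le (s : Fin m → ℝ) (p : Fin n → ℝ) (φ : Fin n → Fin m)
    (hφ : ∀ i k, k ≠ φ i → |s (φ i) - p i| < |s k - p i|) (μ : ℝ) (j0 : Fin m)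
    (hj0 : ∀ k ≠ j0, |s j0 - μ| < |s k - μ|)
    (hμ : 2 * (#(univ.filter (fun k => s k < μ)) + #(univ.filter (fun i => p i < μ))) ≤ m + n) :
    2 * ∑ k ∈ univ.filter (fun k => s k < s j0), weight φ k ≤ m + n := by
  have hproxy : ∀ k, s k < s j0 → s k < μ := fun k hk => by
    have := add_lt_two_mul_of_abs_sub_lt hk (hj0 k (ne_of_apply_ne s hk.ne))
    linarith
  have hfollower : ∀ i, s (φ i) < s j0 → p i < μ := fun i hi => by
    have h1 := two_mul_lt_add_of_abs_sub_lt hi (hφ i j0 (ne_of_apply_ne s hi.ne'))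
    have h2 := add_lt_two_mul_of_abs_sub_lt hi (hj0 (φ i) (ne_of_apply_ne s hi.ne))
    linarith
  have c1 := card_le_card (monotone_filter_right univ fun k _ => hproxy k)
  have c2 := card_le_card (monotone_filter_right univ fun i _ => hfollower i)
  rw [sum_weight_filter]
  omega

end Delegation

theorem weighted_median_winner_is_nearest_to_median_general {m n : ℕ} (hodd : Odd (m + n))
    (s : Fin m → ℝ) (p : Fin n → ℝ)
    (φ : Fin n → Fin m)
    (hφ : ∀ i k, k ≠ φ i → |s (φ i) - p i| < |s k - p i|)
    (μ : ℝ) (hμ : IsMedian (combined s p) μ)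
    (jstar : Fin m)
    (hwm1 : 2 * (∑ k ∈ Finset.univ.filter (fun k => s k < s jstar), weight φ k) ≤
      ∑ k : Fin m, weight φ k)
    (hwm2 : 2 * (∑ k ∈ Finset.univ.filter (fun k => s jstar < s k), weight φ k) ≤
      ∑ k : Fin m, weight φ k)
    (j0 : Fin m) (hj0 : ∀ k ≠ j0, |s j0 - μ| < |s k - μ|) :
    jstar = j0 := by
  obtain ⟨-, hbelow, habove⟩ := hμ
  rw [card_filter_combined, card_combined] at hbelow habove
  have hleft := two_mul_sum_weight_filter_lt_le s p φ hφ μ j0 hj0 hbelow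
  -- the right-hand bound is the left-hand one for the mirrored profile `x ↦ -x`
  have hright : 2 * ∑ k ∈ univ.filter (fun k => s j0 < s k), weight φ k ≤ m + n := by
    simpa using
      two_mul_sum_weight_filter_lt_le (-s) (-p) φ
        (fun i k hk => by simpa only [Pi.neg_apply, neg_sub_neg, abs_sub_comm] using hφ i k hk)
        (-μ) j0 (fun k hk => by simpa only [Pi.neg_apply, neg_sub_neg, abs_sub_comm] using hj0 k hk)
        (by simpa using habove)
  rw [← sum_weight φ] at hodd hleft hright
  have hle := le_of_two_mul_sum_filter_le s (weight φ) hodd hwm1 hright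
  have hge := le_of_two_mul_sum_filter_le s (weight φ) hodd hleft hwm2
  by_contra hne
  exact (hj0 jstar hne).ne (by rw [le_antisymm hle hge])

/-- Under Tullock (nearest-proxy) delegation, any weighted-median winning proxy is
the proxy whose declared position is closest to the unweighted median of the
entire voter population. -/
theorem weighted_median_winner_is_nearest_to_median {m n : ℕ} (hodd : Odd (m + n))
    (s : Fin m → ℝ) (p : Fin n → ℝ) (hs : Function.Injective s)
    (φ : Fin n → Fin m)
    (hφ : ∀ i k, k ≠ φ i → |s (φ i) - p i| < |s k - p i|)
    (μ : ℝ) (hμ : IsMedian (combined s p) μ)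
    (jstar : Fin m)
    (hwm1 : 2 * (∑ k ∈ Finset.univ.filter (fun k => s k < s jstar), weight φ k) ≤
      ∑ k : Fin m, weight φ k)
    (hwm2 : 2 * (∑ k ∈ Finset.univ.filter (fun k => s jstar < s k), weight φ k) ≤
      ∑ k : Fin m, weight φ k)
    (j0 : Fin m) (hj0 : ∀ k ≠ j0, |s j0 - μ| < |s k - μ|) :
    jstar = j0 :=
  weighted_median_winner_is_nearest_to_median_general hodd s p φ hφ μ hμ jstar hwm1 hwm2 j0 hj0
end

section
/- If some proxy's true position equals the unweighted median of the full population, then no proxy has a manipulation under the weighted median rule: the truthful state is a pure Nash equilibrium for the proxies. -/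
lemma median_not_lt {P : Multiset ℝ} (hodd : Odd P.card) {a b : ℝ}
    (ha : IsMedian P a) (hb : IsMedian P b) : ¬ a < b := by
  intro hab
  have h1 : (P.filter (fun y => a < y)).card + (P.filter (fun y => ¬ a < y)).card = P.card := by
    rw [← Multiset.card_add, Multiset.filter_add_not]
  have h2 : (P.filter (fun y => ¬ a < y)).card ≤ (P.filter (fun y => y < b)).card :=
    Multiset.card_le_card (Multiset.monotone_filter_right P
      (fun y hy => lt_of_le_of_lt (not_lt.mp hy) hab))
  obtain ⟨t, ht⟩ := hodd
  have := ha.2.2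
  have := hb.2.1
  omega

lemma median_unique {P : Multiset ℝ} (hodd : Odd P.card) {a b : ℝ}
    (ha : IsMedian P a) (hb : IsMedian P b) : a = b := by
  rcases lt_trichotomy a b with h | h | h
  · exact absurd h (median_not_lt hodd ha hb)
  · exact h
  · exact absurd h (median_not_lt hodd hb ha)

/-- If some proxy's true position equals the unweighted median of the full
population, then no proxy has a manipulation under the weighted median rule
(whose outcome is the proxy position closest to the unweighted median):
the truthful state is a pure Nash equilibrium for the proxies.
Note that the truthful outcome is `med`, since a proxy sits exactly at `med`. -/
theorem truthful_state_pne_of_proxy_at_median {m n : ℕ} (hodd : Odd (m + n))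
    (pM : Fin m → ℝ) (pN : Fin n → ℝ) (med : ℝ)
    (hmed : IsMedian (combined pM pN) med)
    (hat : ∃ k, pM k = med)
    (j : Fin m) (x : ℝ) (hx : x ≠ pM j) (μ' : ℝ)
    (hμ' : IsMedian (combined (Function.update pM j x) pN) μ')
    (j' : Fin m)
    (hj' : ∀ k ≠ j',
      |Function.update pM j x j' - μ'| < |Function.update pM j x k - μ'|) :
    ¬ |Function.update pM j x j' - pM j| < |med - pM j| := by
  by_cases hpj : pM j = med
  · intro h
    rw [hpj, sub_self, abs_zero] at h
    exact (abs_nonneg _).not_gt h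
  -- setup: decompose the combined multiset
  obtain ⟨k, hk⟩ := hat
  have hkj : k ≠ j := fun h => hpj (h ▸ hk)
  set R : Multiset ℝ :=
    (Finset.univ.erase j).val.map pM + Finset.univ.val.map pN with hR
  have huval : (Finset.univ : Finset (Fin m)).val = j ::ₘ (Finset.univ.erase j).val := by
    rw [Finset.erase_val, Multiset.cons_erase (Finset.mem_univ_val j)]
  have hdecomp : ∀ f : Fin m → ℝ, combined f pN
      = f j ::ₘ ((Finset.univ.erase j).val.map f + Finset.univ.val.map pN) := by
    intro f
    rw [combined, huval, Multiset.map_cons, Multiset.cons_add]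
  have hmapeq : (Finset.univ.erase j).val.map (Function.update pM j x)
      = (Finset.univ.erase j).val.map pM := by
    apply Multiset.map_congr rfl
    intro a ha
    exact Function.update_of_ne (Finset.ne_of_mem_erase (Finset.mem_val.mp ha)) _ _
  have hP : combined pM pN = pM j ::ₘ R := hdecomp pM
  have hP' : combined (Function.update pM j x) pN = x ::ₘ R := by
    rw [hdecomp (Function.update pM j x), Function.update_self, hmapeq]
  have hcard : (combined pM pN).card = m + n := by
    simp [combined]
  have hcard' : (combined (Function.update pM j x) pN).card = m + n := by
    simp [combined]
  have hRcard : R.card + 1 = m + n := by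
    rw [← hcard, hP]; simp
  -- med is in the deviated multiset, via proxy k
  have hmedmem : med ∈ combined (Function.update pM j x) pN := by
    rw [combined]
    refine Multiset.mem_add.mpr (Or.inl ?_)
    refine Multiset.mem_map.mpr ⟨k, Finset.mem_univ_val k, ?_⟩
    rw [Function.update_of_ne hkj]; exact hk
  intro hlt
  set o := Function.update pM j x j' with ho
  have hok : ∀ hkj' : k ≠ j', |o - μ'| < |med - μ'| := by
    intro hkj'
    have h := hj' k hkj'
    rwa [Function.update_of_ne hkj, hk] at h
  rcases lt_or_gt_of_ne hpj with hless | hmore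
  · -- pM j < med
    have hlt' : o < med := by
      rw [abs_of_pos (by linarith : (0:ℝ) < med - pM j)] at hlt
      have := abs_lt.mp hlt
      linarith [this.2]
    have hmu : med ≤ μ' := by
      by_cases hxm : x < med
      · -- counts unchanged: med is still a median, so μ' = med
        have hmed' : IsMedian (combined (Function.update pM j x) pN) med := by
          refine ⟨hmedmem, ?_, ?_⟩
          · have h0 := hmed.2.1
            rw [hP, Multiset.filter_cons, if_pos hless] at h0
            rw [hP', Multiset.filter_cons, if_pos hxm]
            simpa using h0
          · have h0 := hmed.2.2
            rw [hP, Multiset.filter_cons, if_neg (by simpa using hless.le)] at h0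
            rw [hP', Multiset.filter_cons, if_neg (by simpa using hxm.le)]
            simpa using h0
        exact le_of_eq (median_unique (hcard' ▸ hodd) hmed' hμ')
      · -- x ≥ med: counting shows μ' cannot be below med
        push_neg at hxm
        by_contra hcon
        push_neg at hcon
        have h0 := hmed.2.1
        rw [hP, Multiset.filter_cons, if_pos hless] at h0
        have h1 := hμ'.2.2
        rw [hP', Multiset.filter_cons, if_pos (lt_of_lt_of_le hcon hxm)] at h1
        simp only [Multiset.card_cons, Multiset.card_add, Multiset.card_singleton] at h0 h1
        have h2 : (R.filter (fun y => ¬ y < med)).card ≤ (R.filter (fun y => μ' < y)).card :=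
          Multiset.card_le_card (Multiset.monotone_filter_right R
            (fun y hy => lt_of_lt_of_le hcon (not_lt.mp hy)))
        have h3 : (R.filter (fun y => y < med)).card + (R.filter (fun y => ¬ y < med)).card = R.card := by
          rw [← Multiset.card_add, Multiset.filter_add_not]
        omega
    -- now contradiction with the nearest-proxy condition
    by_cases hkj' : k = j'
    · have : o = med := by rw [ho, ← hkj', Function.update_of_ne hkj, hk]
      linarith
    · have h := hok hkj'
      rw [abs_of_nonpos (by linarith : o - μ' ≤ 0),
        abs_of_nonpos (by linarith : med - μ' ≤ 0)] at h
      linarith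
  · -- pM j > med
    have hlt' : med < o := by
      rw [abs_of_neg (by linarith : med - pM j < 0)] at hlt
      have := abs_lt.mp hlt
      linarith [this.1]
    have hmu : μ' ≤ med := by
      by_cases hxm : med < x
      · have hmed' : IsMedian (combined (Function.update pM j x) pN) med := by
          refine ⟨hmedmem, ?_, ?_⟩
          · have h0 := hmed.2.1
            rw [hP, Multiset.filter_cons, if_neg (by simpa using hmore.le)] at h0
            rw [hP', Multiset.filter_cons, if_neg (by simpa using hxm.le)]
            simpa using h0
          · have h0 := hmed.2.2
            rw [hP, Multiset.filter_cons, if_pos hmore] at h0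
            rw [hP', Multiset.filter_cons, if_pos hxm]
            simpa using h0
        exact ge_of_eq (median_unique (hcard' ▸ hodd) hmed' hμ')
      · push_neg at hxm
        by_contra hcon
        push_neg at hcon
        have h0 := hmed.2.2
        rw [hP, Multiset.filter_cons, if_pos hmore] at h0
        have h1 := hμ'.2.1
        rw [hP', Multiset.filter_cons, if_pos (lt_of_le_of_lt hxm hcon)] at h1
        simp only [Multiset.card_cons, Multiset.card_add, Multiset.card_singleton] at h0 h1
        have h2 : (R.filter (fun y => ¬ med < y)).card ≤ (R.filter (fun y => y < μ')).card :=
          Multiset.card_le_card (Multiset.monotone_filter_right R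
            (fun y hy => lt_of_le_of_lt (not_lt.mp hy) hcon))
        have h3 : (R.filter (fun y => med < y)).card + (R.filter (fun y => ¬ med < y)).card = R.card := by
          rw [← Multiset.card_add, Multiset.filter_add_not]
        omega
    by_cases hkj' : k = j'
    · have : o = med := by rw [ho, ← hkj', Function.update_of_ne hkj, hk]
      linarith
    · have h := hok hkj'
      rw [abs_of_nonneg (by linarith : (0:ℝ) ≤ o - μ'),
        abs_of_nonneg (by linarith : (0:ℝ) ≤ med - μ')] at h
      linarith
end

section
/- If all proxies' true positions lie strictly on the same side of the unweighted median med of the full population, then no proxy has a manipulation under the weighted median rule in the truthful state. -/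
theorem IsMedian.le_of_add_of_forall_lt {A B F : Multiset ℝ} {med μ : ℝ}
    (hodd : Odd (A.card + F.card)) (hcard : B.card = A.card) (hA : ∀ a ∈ A, a < med)
    (hmed : IsMedian (A + F) med) (hμ : IsMedian (B + F) μ) : med ≤ μ := by
  by_contra! hμlt
  have hbelow : ((A + F).filter (· < med)).card = A.card + (F.filter (· < med)).card := by
    rw [Multiset.filter_add, Multiset.card_add, Multiset.filter_eq_self.2 hA]
  have hsplit : (F.filter (· < med)).card + (F.filter (¬ · < med)).card = F.card := by
    rw [← Multiset.card_add, Multiset.filter_add_not]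
  have habove : (F.filter (¬ · < med)).card ≤ ((B + F).filter (μ < ·)).card := by
    rw [Multiset.filter_add, Multiset.card_add]
    exact le_add_left (Multiset.card_le_card (Multiset.monotone_filter_right _
      fun y hy => hμlt.trans_le (not_lt.1 hy)))
  have h₁ := hmed.2.1
  have h₂ := hμ.2.2
  rw [Multiset.card_add, hbelow] at h₁
  rw [Multiset.card_add, hcard] at h₂
  obtain ⟨t, ht⟩ := hodd
  omega

theorem abs_sub_le_abs_sub_of_abs_sub_le {a b c y : ℝ} (hab : a ≤ b) (hbc : b ≤ c)
    (hy : |y - c| ≤ |b - c|) : |b - a| ≤ |y - a| := by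
  rw [abs_of_nonpos (sub_nonpos.2 hbc)] at hy
  rw [abs_of_nonneg (sub_nonneg.2 hab), abs_of_nonneg (by linarith [neg_abs_le (y - c)])]
  linarith [neg_abs_le (y - c)]

theorem no_manipulation_same_side_general {m n : ℕ} (hodd : Odd (m + n))
    (pM : Fin m → ℝ) (pN : Fin n → ℝ) (med : ℝ)
    (hmed : IsMedian (combined pM pN) med)
    (hside : ∀ k, pM k < med)
    (j0 : Fin m) (hj0 : ∀ k ≠ j0, |pM j0 - med| < |pM k - med|)
    (j : Fin m) (x : ℝ) (μ' : ℝ)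
    (hμ' : IsMedian (combined (Function.update pM j x) pN) μ')
    (j' : Fin m)
    (hj' : ∀ k ≠ j',
      |Function.update pM j x j' - μ'| < |Function.update pM j x k - μ'|) :
    ¬ |Function.update pM j x j' - pM j| < |pM j0 - pM j| := by
  have hmedμ : med ≤ μ' :=
    hmed.le_of_add_of_forall_lt (by simpa using hodd) (by simp)
      (by simpa using fun k => hside k) hμ'
  rcases eq_or_ne j j0 with rfl | hjj0
  · simp
  have hj_le : pM j ≤ pM j0 := by
    have h := hj0 j hjj0
    rw [abs_of_neg (sub_neg.2 (hside j0)), abs_of_neg (sub_neg.2 (hside j))] at h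
    linarith
  have hclosest : |Function.update pM j x j' - μ'| ≤ |pM j0 - μ'| := by
    rw [← Function.update_of_ne hjj0.symm x pM]
    rcases eq_or_ne j0 j' with rfl | hj0j'
    · exact le_rfl
    · exact (hj' j0 hj0j').le
  exact not_lt.2 (abs_sub_le_abs_sub_of_abs_sub_le hj_le ((hside j0).le.trans hmedμ) hclosest)

/-- If all proxies' true positions lie strictly on the same side of (w.l.o.g.
strictly below) the unweighted median of the full population, then no proxy has a
manipulation under the weighted median rule in the truthful state: no unilateral
deviation makes the outcome (the proxy position closest to the new unweighted
median) strictly closer to the deviator's peak than the truthful outcome. -/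
theorem no_manipulation_same_side {m n : ℕ} (hodd : Odd (m + n))
    (pM : Fin m → ℝ) (pN : Fin n → ℝ) (med : ℝ)
    (hmed : IsMedian (combined pM pN) med)
    (hside : ∀ k, pM k < med)
    (j0 : Fin m) (hj0 : ∀ k ≠ j0, |pM j0 - med| < |pM k - med|)
    (j : Fin m) (x : ℝ) (hx : x ≠ pM j) (μ' : ℝ)
    (hμ' : IsMedian (combined (Function.update pM j x) pN) μ')
    (j' : Fin m)
    (hj' : ∀ k ≠ j',
      |Function.update pM j x j' - μ'| < |Function.update pM j x k - μ'|) :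
    ¬ |Function.update pM j x j' - pM j| < |pM j0 - pM j| :=
  no_manipulation_same_side_general hodd pM pN med hmed hside j0 hj0 j x μ' hμ' j' hj'
end

section
/- If no proxy's true position equals the unweighted median med of the full population and there exist proxies j, j' with p_j < med < p_{j'}, then some proxy has a manipulation: in particular, the proxy on the opposite side of med from the truthful winner can deviate to report med, changing the outcome to med, which is strictly closer to its peak than the truthful outcome. -/
theorem Multiset.map_update_eq_cons_erase {α β : Type*} [DecidableEq α] [DecidableEq β]
    {s : Multiset α} (hs : s.Nodup) {a : α} (ha : a ∈ s) (f : α → β) (b : β) :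
    s.map (Function.update f a b) = b ::ₘ (s.map f).erase (f a) := by
  have hrest : (s.erase a).map (Function.update f a b) = (s.erase a).map f :=
    Multiset.map_congr rfl fun x hx =>
      Function.update_of_ne ((hs.mem_erase_iff).mp hx).1 _ _
  conv_lhs => rw [← Multiset.cons_erase ha]
  conv_rhs => rw [← Multiset.cons_erase ha]
  simp only [Multiset.map_cons, Function.update_self, hrest, Multiset.erase_cons_head]

theorem IsMedian.cons_erase {P : Multiset ℝ} {x y : ℝ} (h : IsMedian P x) (hy : y ∈ P) :
    IsMedian (x ::ₘ P.erase y) x := by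
  obtain ⟨-, hlt, hgt⟩ := h
  have hcard : (x ::ₘ P.erase y).card = P.card := by
    rw [Multiset.card_cons, Multiset.card_erase_add_one hy]
  have hfilter : ∀ (p : ℝ → Prop) [DecidablePred p], ¬ p x →
      ((x ::ₘ P.erase y).filter p).card ≤ (P.filter p).card := fun p _ hpx => by
    rw [Multiset.filter_cons_of_neg _ hpx]
    exact Multiset.card_le_card (Multiset.filter_le_filter p (Multiset.erase_le y P))
  refine ⟨Multiset.mem_cons_self x _, ?_, ?_⟩
  · have := hfilter (· < x) (lt_irrefl x)
    omega
  · have := hfilter (x < ·) (lt_irrefl x)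
    omega

theorem combined_update_eq_cons_erase {m n : ℕ} (pM : Fin m → ℝ) (pN : Fin n → ℝ)
    (j : Fin m) (x : ℝ) :
    combined (Function.update pM j x) pN = x ::ₘ (combined pM pN).erase (pM j) := by
  have hj : pM j ∈ Finset.univ.val.map pM := Multiset.mem_map_of_mem pM (Finset.mem_univ_val j)
  rw [combined, combined, Multiset.erase_add_left_pos _ hj, ← Multiset.cons_add,
    Multiset.map_update_eq_cons_erase Finset.univ.nodup (Finset.mem_univ_val j)]

theorem IsMedian.combined_update {m n : ℕ} {pM : Fin m → ℝ} {pN : Fin n → ℝ} {med : ℝ}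
    (hmed : IsMedian (combined pM pN) med) (j : Fin m) :
    IsMedian (combined (Function.update pM j med) pN) med := by
  rw [combined_update_eq_cons_erase]
  exact hmed.cons_erase <|
    Multiset.mem_add.mpr (Or.inl (Multiset.mem_map_of_mem pM (Finset.mem_univ_val j)))

theorem abs_sub_lt_abs_sub_of_between {α : Type*} [AddCommGroup α] [LinearOrder α]
    [IsOrderedAddMonoid α] {a b c : α} (h : a < b ∧ b < c ∨ c < b ∧ b < a) :
    |b - c| < |a - c| := by
  rcases h with ⟨hab, hbc⟩ | ⟨hcb, hba⟩
  · rw [abs_of_neg (sub_neg.mpr hbc), abs_of_neg (sub_neg.mpr (hab.trans hbc)), neg_sub, neg_sub]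
    exact sub_lt_sub_left hab c
  · rw [abs_of_pos (sub_pos.mpr hcb), abs_of_pos (sub_pos.mpr (hcb.trans hba))]
    exact sub_lt_sub_right hba c

theorem manipulation_exists_of_proxies_on_both_sides_general {m n : ℕ}
    (pM : Fin m → ℝ) (pN : Fin n → ℝ) (med : ℝ)
    (hmed : IsMedian (combined pM pN) med)
    (hne : ∀ k, pM k ≠ med)
    (hboth : ∃ j j', pM j < med ∧ med < pM j')
    (j0 : Fin m) :
    ∃ j, IsMedian (combined (Function.update pM j med) pN) med ∧
      |med - pM j| < |pM j0 - pM j| := by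
  obtain ⟨jl, jr, hl, hr⟩ := hboth
  rcases (hne j0).lt_or_gt with h0 | h0
  · exact ⟨jr, hmed.combined_update jr, abs_sub_lt_abs_sub_of_between (.inl ⟨h0, hr⟩)⟩
  · exact ⟨jl, hmed.combined_update jl, abs_sub_lt_abs_sub_of_between (.inr ⟨hl, h0⟩)⟩

/-- If no proxy sits at the unweighted median `med` of the full population and
there are proxies strictly on both sides of `med`, then some proxy has a
manipulation: deviating to report `med` keeps the combined median at `med`,
so the new outcome is `med` (the position closest to the median), which is
strictly closer to the deviator's peak than the truthful outcome `pM j0`. -/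
theorem manipulation_exists_of_proxies_on_both_sides {m n : ℕ} (hodd : Odd (m + n))
    (pM : Fin m → ℝ) (pN : Fin n → ℝ) (med : ℝ)
    (hmed : IsMedian (combined pM pN) med)
    (hne : ∀ k, pM k ≠ med)
    (hboth : ∃ j j', pM j < med ∧ med < pM j')
    (j0 : Fin m) (hj0 : ∀ k ≠ j0, |pM j0 - med| < |pM k - med|) :
    ∃ j, IsMedian (combined (Function.update pM j med) pN) med ∧
      |med - pM j| < |pM j0 - pM j| :=
  manipulation_exists_of_proxies_on_both_sides_general pM pN med hmed hne hboth j0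
end

section
/- In a monotone better-response dynamics, the unweighted median of the combined profile is invariant: if at each step the moving proxy's new report stays weakly on the same side of the true median med as its true peak, then med(s^t, p|_N) = med for all t. -/
/-!
A monotone report never crosses `med`: a point strictly below `med` after the move was strictly
below it before, and symmetrically above. So the numbers of points strictly below and strictly
above `med` can only shrink, while a proxy whose peak is `med` is pinned at `med`, which therefore
stays in the profile.
-/

namespace Multiset

theorem countP_map_le_countP_map {ι α : Type*} (p : α → Prop) [DecidablePred p]
    (s : Multiset ι) {f g : ι → α} (h : ∀ i ∈ s, p (g i) → p (f i)) :
    (s.map g).countP p ≤ (s.map f).countP p := by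
  induction s using Multiset.induction_on with
  | empty => simp
  | cons a s ih =>
    simp only [map_cons, countP_cons]
    grind

end Multiset

theorem IsMedian.map_of_sameSide {ι : Type*} {s : Multiset ι} {f g : ι → ℝ} {R : Multiset ℝ}
    {x : ℝ} (hx : IsMedian (s.map f + R) x)
    (hside : ∀ i ∈ s, (f i ≤ x → g i ≤ x) ∧ (x ≤ f i → x ≤ g i)) :
    IsMedian (s.map g + R) x := by
  obtain ⟨hmem, hlt, hgt⟩ := hx
  have below : (s.map g).countP (· < x) ≤ (s.map f).countP (· < x) :=
    Multiset.countP_map_le_countP_map _ s fun i hi hgi =>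
      lt_of_not_ge fun hfi => (hside i hi).2 hfi |>.not_gt hgi
  have above : (s.map g).countP (x < ·) ≤ (s.map f).countP (x < ·) :=
    Multiset.countP_map_le_countP_map _ s fun i hi hgi =>
      lt_of_not_ge fun hfi => (hside i hi).1 hfi |>.not_gt hgi
  simp only [IsMedian, Multiset.filter_add, Multiset.card_add, Multiset.card_map,
    ← Multiset.countP_eq_card_filter] at hlt hgt ⊢
  refine ⟨?_, by omega, by omega⟩
  rcases Multiset.mem_add.1 hmem with hf | hR
  · obtain ⟨i, hi, rfl⟩ := Multiset.mem_map.1 hf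
    exact Multiset.mem_add.2 <| .inl <| Multiset.mem_map.2
      ⟨i, hi, le_antisymm ((hside i hi).1 le_rfl) ((hside i hi).2 le_rfl)⟩
  · exact Multiset.mem_add.2 (.inr hR)

theorem monotone_dynamics_median_invariant_general {m n : ℕ}
    (pM : Fin m → ℝ) (pN : Fin n → ℝ) (med : ℝ)
    (hmed : IsMedian (combined pM pN) med)
    (s : ℕ → Fin m → ℝ)
    (hmono : ∀ t j, (pM j ≤ med → s t j ≤ med) ∧ (med ≤ pM j → med ≤ s t j)) :
    ∀ t, IsMedian (combined (s t) pN) med :=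
  fun t => hmed.map_of_sameSide fun j _ => hmono t j

/-- In a monotone dynamics (each proxy's reports always stay weakly on the same
side of the true median `med` as its true peak, and one proxy moves per step),
the unweighted median of the combined profile is invariant: it equals `med`
at every step. -/
theorem monotone_dynamics_median_invariant {m n : ℕ} (hodd : Odd (m + n))
    (pM : Fin m → ℝ) (pN : Fin n → ℝ) (med : ℝ)
    (hmed : IsMedian (combined pM pN) med)
    (s : ℕ → Fin m → ℝ) (h0 : s 0 = pM)
    (hstep : ∀ t, ∃ j, ∀ k ≠ j, s (t + 1) k = s t k)
    (hmono : ∀ t j, (pM j ≤ med → s t j ≤ med) ∧ (med ≤ pM j → med ≤ s t j)) :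
    ∀ t, IsMedian (combined (s t) pN) med :=
  monotone_dynamics_median_invariant_general pM pN med hmed s hmono
end
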